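/- arXiv:2006.01874 — 3 statements merged into one kernel-verified Lean document; each statement's English description precedes it below -/
import Mathlib

section
/- Let π : G → U(H) be a map from a group G to the unitary group of a Hilbert space H such that for each g,h there is a scalar c(g,h) ∈ 𝕋 with π(g)π(h) = c(g,h)π(gh) (a projective representation). Suppose g₁,…,g_m ∈ G and δ > 0 are such that for every ξ ∈ H, δ²‖ξ‖² ≤ Σ_{i,j} ‖π(g_i)ξ − π(g_j)ξ‖². Then ‖Σ_{i=1}^m π(g_i)‖ ≤ sqrt(m² − δ²/2). -/
/-- Let `π` be a projective unitary representation of a group `G` on a Hilbert space `H`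
(with 𝕋-valued multiplier `c`). If `g₁,…,g_m ∈ G` and `δ > 0` satisfy
`δ²‖ξ‖² ≤ Σ_{i,j} ‖π(g_i)ξ − π(g_j)ξ‖²` for every `ξ`, then
`‖Σ_{i=1}^m π(g_i)‖ ≤ √(m² − δ²/2)`. -/
theorem stmt3 {H : Type*} [NormedAddCommGroup H] [InnerProductSpace ℂ H] [CompleteSpace H]
    {G : Type*} [Group G] (π : G → H →L[ℂ] H)
    (hunit : ∀ g, π g ∈ unitary (H →L[ℂ] H))
    (c : G → G → Circle)
    (hproj : ∀ g h ξ, π g (π h ξ) = (c g h : ℂ) • π (g * h) ξ)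
    (m : ℕ) (g : Fin m → G) (δ : ℝ) (hδ : 0 < δ)
    (hyp : ∀ ξ : H, δ ^ 2 * ‖ξ‖ ^ 2 ≤ ∑ i, ∑ j, ‖π (g i) ξ - π (g j) ξ‖ ^ 2) :
    ‖∑ i, π (g i)‖ ≤ Real.sqrt ((m : ℝ) ^ 2 - δ ^ 2 / 2) := by
  have hinner : ∀ (gg : G) (ξ η : H),
      (inner ℂ (π gg ξ) (π gg η) : ℂ) = inner ℂ ξ η := by
    intro gg ξ η
    have h := (hunit gg).1
    calc (inner ℂ (π gg ξ) (π gg η) : ℂ)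
        = inner ℂ ((ContinuousLinearMap.adjoint (π gg)) (π gg ξ)) η := by
          rw [ContinuousLinearMap.adjoint_inner_left]
      _ = inner ℂ ((star (π gg) * π gg) ξ) η := by
          rw [ContinuousLinearMap.star_eq_adjoint, ContinuousLinearMap.mul_apply]
      _ = inner ℂ ξ η := by rw [h, ContinuousLinearMap.one_apply]
  have hnorm : ∀ (gg : G) (ξ : H), ‖π gg ξ‖ = ‖ξ‖ := by
    intro gg ξ
    have h := congrArg RCLike.re (hinner gg ξ ξ)
    rw [@inner_self_eq_norm_sq ℂ, @inner_self_eq_norm_sq ℂ] at h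
    nlinarith [norm_nonneg (π gg ξ), norm_nonneg ξ]
  -- key identity
  have key : ∀ ξ : H, (∑ i, ∑ j, ‖π (g i) ξ - π (g j) ξ‖ ^ 2)
      = 2 * (m : ℝ) ^ 2 * ‖ξ‖ ^ 2 - 2 * ‖∑ i, π (g i) ξ‖ ^ 2 := by
    intro ξ
    have expand : ∀ i j : Fin m, ‖π (g i) ξ - π (g j) ξ‖ ^ 2
        = 2 * ‖ξ‖ ^ 2 - 2 * RCLike.re (inner ℂ (π (g i) ξ) (π (g j) ξ) : ℂ) := by
      intro i j
      have := @norm_sub_sq ℂ H _ _ _ (π (g i) ξ) (π (g j) ξ)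
      rw [hnorm, hnorm] at this
      rw [this]; ring
    have hsum : (∑ i, ∑ j, RCLike.re (inner ℂ (π (g i) ξ) (π (g j) ξ) : ℂ))
        = ‖∑ i, π (g i) ξ‖ ^ 2 := by
      rw [← @inner_self_eq_norm_sq ℂ, sum_inner]
      rw [map_sum]
      refine Finset.sum_congr rfl fun i _ => ?_
      rw [inner_sum, map_sum]
    calc (∑ i, ∑ j, ‖π (g i) ξ - π (g j) ξ‖ ^ 2)
        = ∑ i : Fin m, ∑ j : Fin m,
            (2 * ‖ξ‖ ^ 2 - 2 * RCLike.re (inner ℂ (π (g i) ξ) (π (g j) ξ) : ℂ)) := by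
          refine Finset.sum_congr rfl fun i _ => Finset.sum_congr rfl fun j _ => expand i j
      _ = 2 * (m : ℝ) ^ 2 * ‖ξ‖ ^ 2 - 2 * ‖∑ i, π (g i) ξ‖ ^ 2 := by
          rw [← hsum]
          simp [Finset.sum_sub_distrib, ← Finset.sum_mul, ← Finset.mul_sum]
          ring
  refine ContinuousLinearMap.opNorm_le_bound _ (Real.sqrt_nonneg _) fun ξ => ?_
  have h1 := hyp ξ
  rw [key ξ] at h1
  have h2 : ‖(∑ i, π (g i)) ξ‖ ^ 2 ≤ ((m : ℝ) ^ 2 - δ ^ 2 / 2) * ‖ξ‖ ^ 2 := by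
    have : ((∑ i, π (g i)) ξ) = ∑ i, π (g i) ξ := by
      simp [ContinuousLinearMap.sum_apply]
    rw [this]
    nlinarith
  calc ‖(∑ i, π (g i)) ξ‖ = Real.sqrt (‖(∑ i, π (g i)) ξ‖ ^ 2) := by
        rw [Real.sqrt_sq (norm_nonneg _)]
    _ ≤ Real.sqrt (((m : ℝ) ^ 2 - δ ^ 2 / 2) * ‖ξ‖ ^ 2) := Real.sqrt_le_sqrt h2
    _ = Real.sqrt ((m : ℝ) ^ 2 - δ ^ 2 / 2) * ‖ξ‖ := by
        rw [Real.sqrt_mul' _ (sq_nonneg _), Real.sqrt_sq (norm_nonneg _)]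
end

section
/- Let R be a commutative ring. The map c : (R² ⋊ SL₂(R)) × (R² ⋊ SL₂(R)) → R defined by c((a,g),(b,h)) = det[a, g·b] (the 2×2 determinant of the column vectors a and g·b) is a 2-cocycle, where the action of the semidirect product on R is trivial. -/
/-!
Write `x = (a,g)`, `y = (b,h)`, `z = (v,k)`. Expanding by bilinearity of `det`, both sides of the
cocycle identity become `det[a, g·b] + det[a, gh·v] + det[b, h·v]`: on the left the last term
appears as `det[g·b, gh·v]`, which equals `det[b, h·v]` because `det g = 1`.
-/

namespace Matrix

variable {R : Type*} [CommRing R]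

/-- `colDet u v = det[u, v]`, the determinant of the `2 × 2` matrix with columns `u` and `v`. -/
def colDet (u v : Fin 2 → R) : R := u 0 * v 1 - u 1 * v 0

theorem colDet_eq_det (u v : Fin 2 → R) : colDet u v = (of ![u, v]).det := by
  simp [colDet, det_fin_two]

theorem colDet_add_left (u u' v : Fin 2 → R) :
    colDet (u + u') v = colDet u v + colDet u' v := by
  simp only [colDet, Pi.add_apply]; ring

theorem colDet_add_right (u v v' : Fin 2 → R) :
    colDet u (v + v') = colDet u v + colDet u v' := by
  simp only [colDet, Pi.add_apply]; ring

theorem colDet_mulVec_mulVec (g : SpecialLinearGroup (Fin 2) R) (u v : Fin 2 → R) :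
    colDet (g *ᵥ u) (g *ᵥ v) = colDet u v := by
  have hrows :
      of ![(g : Matrix (Fin 2) (Fin 2) R) *ᵥ u, g *ᵥ v] = of ![u, v] * (g : Matrix _ _ R)ᵀ := by
    ext i j
    fin_cases i <;> fin_cases j <;> simp [vecMul, dotProduct, Fin.sum_univ_two, mul_comm]
  rw [colDet_eq_det, colDet_eq_det, hrows, det_mul, det_transpose, g.det_coe, mul_one]

theorem colDet_cocycle (a b v : Fin 2 → R) (g h : SpecialLinearGroup (Fin 2) R) :
    colDet a (g *ᵥ b) + colDet (a + g *ᵥ b) ((g * h : SpecialLinearGroup (Fin 2) R) *ᵥ v)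
      = colDet a (g *ᵥ (b + h *ᵥ v)) + colDet b (h *ᵥ v) := by
  rw [SpecialLinearGroup.coe_mul, ← mulVec_mulVec, colDet_add_left, colDet_mulVec_mulVec,
    mulVec_add, colDet_add_right]
  ring

end Matrix

/-- For a commutative ring `R`, the map `c((a,g),(b,h)) = det[a, g·b]` on the semidirect
product `R² ⋊ SL₂(R)` is a 2-cocycle (trivial coefficients in `R`). -/
theorem stmt8 {R : Type*} [CommRing R]
    (c : ((Fin 2 → R) × Matrix.SpecialLinearGroup (Fin 2) R) →
         ((Fin 2 → R) × Matrix.SpecialLinearGroup (Fin 2) R) → R)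
    (hc : ∀ x y, c x y =
      x.1 0 * ((x.2 : Matrix (Fin 2) (Fin 2) R).mulVec y.1) 1
        - x.1 1 * ((x.2 : Matrix (Fin 2) (Fin 2) R).mulVec y.1) 0)
    (mul : ((Fin 2 → R) × Matrix.SpecialLinearGroup (Fin 2) R) →
           ((Fin 2 → R) × Matrix.SpecialLinearGroup (Fin 2) R) →
           ((Fin 2 → R) × Matrix.SpecialLinearGroup (Fin 2) R))
    (hmul : ∀ x y, mul x y =
      (x.1 + (x.2 : Matrix (Fin 2) (Fin 2) R).mulVec y.1, x.2 * y.2)) :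
    ∀ x y z, c x y + c (mul x y) z = c x (mul y z) + c y z := by
  have hc_colDet : ∀ x y, c x y = Matrix.colDet x.1 ((x.2 : Matrix (Fin 2) (Fin 2) R).mulVec y.1) := hc
  intro ⟨a, g⟩ ⟨b, h⟩ ⟨v, k⟩
  simp only [hc_colDet, hmul]
  exact Matrix.colDet_cocycle a b v g h
end

section
/- Let 0 → ℤ → Γ̃ → Γ → 0 be a central extension of groups where Γ̃ has the property that every homomorphism Γ̃ → (ℝ,+) is trivial (e.g. Γ̃ has property (T)), and where ℤ embeds as an infinite central subgroup of Γ̃. Let q : Γ → Γ̃ be a set-theoretic section of the quotient map p, and let c(g,h) = q(g)q(h)q(gh)⁻¹ ∈ ℤ be the associated 2-cocycle. Then c is not an ℝ-valued 2-coboundary: there is no function b : Γ → ℝ with c(g,h) = b(g) + b(h) − b(gh) for all g,h ∈ Γ. -/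
/-!
Writing `q (p g) = ι (r g) * g`, the defect `r : Γ̃ → ℤ` of the section satisfies
`r x + r y = c (p x) (p y) + r (x * y)` because `ℤ` is central. If `c = δb` over `ℝ`, then
`x ↦ b (p x) - r x` is a homomorphism `Γ̃ → ℝ` which restricts to the inclusion `ℤ → ℝ` on the
central copy of `ℤ`, so it is not trivial.
-/

section CentralExtension

variable {Γ' Γ A : Type*} [Group Γ'] [Group Γ] [AddGroup A]
  (p : Γ' →* Γ) (ι : A → Γ') (q : Γ → Γ')

noncomputable def sectionOffset (g : Γ') : A :=
  Function.invFun ι (q (p g) * g⁻¹)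

theorem apply_sectionOffset (hker : ∀ g : Γ', p g = 1 ↔ ∃ n : A, g = ι n)
    (hq : ∀ g, p (q g) = g) (g : Γ') :
    ι (sectionOffset p ι q g) = q (p g) * g⁻¹ := by
  obtain ⟨n, hn⟩ := (hker (q (p g) * g⁻¹)).mp (by simp [hq])
  exact Function.invFun_eq ⟨n, hn.symm⟩

theorem sectionOffset_mul (hιhom : ∀ m n : A, ι (m + n) = ι m * ι n)
    (hιinj : Function.Injective ι) (hcentral : ∀ (n : A) (g : Γ'), ι n * g = g * ι n)
    (hker : ∀ g : Γ', p g = 1 ↔ ∃ n : A, g = ι n) (hq : ∀ g, p (q g) = g)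
    (c : Γ → Γ → A) (hc : ∀ g h, ι (c g h) = q g * q h * (q (g * h))⁻¹) (x y : Γ') :
    sectionOffset p ι q x + sectionOffset p ι q y =
      c (p x) (p y) + sectionOffset p ι q (x * y) := by
  apply hιinj
  rw [hιhom, hιhom, apply_sectionOffset p ι q hker hq x, mul_assoc, ← hcentral _ x⁻¹,
    apply_sectionOffset p ι q hker hq, apply_sectionOffset p ι q hker hq, hc, map_mul]
  group

theorem sectionOffset_apply (hιhom : ∀ m n : A, ι (m + n) = ι m * ι n)
    (hιinj : Function.Injective ι) (hker : ∀ g : Γ', p g = 1 ↔ ∃ n : A, g = ι n)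
    (hq : ∀ g, p (q g) = g)
    (c : Γ → Γ → A) (hc : ∀ g h, ι (c g h) = q g * q h * (q (g * h))⁻¹) (n : A) :
    sectionOffset p ι q (ι n) + n = c 1 1 := by
  apply hιinj
  rw [hιhom, apply_sectionOffset p ι q hker hq, hc, (hker (ι n)).mpr ⟨n, rfl⟩]
  group

theorem exists_hom_extending_of_isCoboundary {B : Type*} [AddCommGroup B]
    (hιhom : ∀ m n : A, ι (m + n) = ι m * ι n)
    (hιinj : Function.Injective ι) (hcentral : ∀ (n : A) (g : Γ'), ι n * g = g * ι n)
    (hker : ∀ g : Γ', p g = 1 ↔ ∃ n : A, g = ι n) (hq : ∀ g, p (q g) = g)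
    (c : Γ → Γ → A) (hc : ∀ g h, ι (c g h) = q g * q h * (q (g * h))⁻¹)
    (φ : A →+ B) (b : Γ → B) (hb : ∀ g h, φ (c g h) = b g + b h - b (g * h)) :
    ∃ s : Γ' → B, (∀ x y, s (x * y) = s x + s y) ∧ ∀ n, s (ι n) = φ n := by
  refine ⟨fun g => b (p g) - φ (sectionOffset p ι q g), fun x y => ?_, fun n => ?_⟩
  · have hr := congrArg φ (sectionOffset_mul p ι q hιhom hιinj hcentral hker hq c hc x y)
    simp only [map_add, hb, map_mul] at hr ⊢
    linear_combination (norm := abel) hr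
  · have hr := congrArg φ (sectionOffset_apply p ι q hιhom hιinj hker hq c hc n)
    have hb1 := hb 1 1
    simp only [map_add, mul_one] at hr hb1
    show b (p (ι n)) - _ = _
    rw [(hker (ι n)).mpr ⟨n, rfl⟩]
    linear_combination (norm := abel) -hb1 - hr

end CentralExtension

theorem stmt19_general {Γ' Γ : Type*} [Group Γ'] [Group Γ]
    (p : Γ' →* Γ)
    (ι : ℤ → Γ') (hιhom : ∀ m n : ℤ, ι (m + n) = ι m * ι n)
    (hιinj : Function.Injective ι)
    (hcentral : ∀ (n : ℤ) (g : Γ'), ι n * g = g * ι n)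
    (hker : ∀ g : Γ', p g = 1 ↔ ∃ n : ℤ, g = ι n)
    (hT : ∀ s : Γ' → ℝ, (∀ a b : Γ', s (a * b) = s a + s b) → ∀ a, s a = 0)
    (q : Γ → Γ') (hq : ∀ g, p (q g) = g)
    (c : Γ → Γ → ℤ) (hc : ∀ g h, ι (c g h) = q g * q h * (q (g * h))⁻¹) :
    ¬ ∃ b : Γ → ℝ, ∀ g h, (c g h : ℝ) = b g + b h - b (g * h) := by
  rintro ⟨b, hb⟩
  obtain ⟨s, hs_mul, hs_ι⟩ := exists_hom_extending_of_isCoboundary p ι q hιhom hιinj hcentral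
    hker hq c hc (Int.castAddHom ℝ) b hb
  have h1 := hT s hs_mul (ι 1)
  rw [hs_ι] at h1
  simp at h1

/-- Let `0 → ℤ → Γ̃ → Γ → 0` be a central extension where `ℤ` embeds as an infinite central
subgroup of `Γ̃` via `ι`, and every homomorphism `Γ̃ → (ℝ,+)` is trivial (e.g. `Γ̃` has
property (T)). Let `q` be a set-theoretic section of the quotient `p` and
`c(g,h) = q(g)q(h)q(gh)⁻¹ ∈ ℤ` the associated 2-cocycle. Then `c` is not an ℝ-valued
2-coboundary: there is no `b : Γ → ℝ` with `c(g,h) = b(g) + b(h) − b(gh)`. -/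
theorem stmt19 {Γ' Γ : Type*} [Group Γ'] [Group Γ]
    (p : Γ' →* Γ) (hp : Function.Surjective p)
    (ι : ℤ → Γ') (hιhom : ∀ m n : ℤ, ι (m + n) = ι m * ι n)
    (hιinj : Function.Injective ι)
    (hcentral : ∀ (n : ℤ) (g : Γ'), ι n * g = g * ι n)
    (hker : ∀ g : Γ', p g = 1 ↔ ∃ n : ℤ, g = ι n)
    (hT : ∀ s : Γ' → ℝ, (∀ a b : Γ', s (a * b) = s a + s b) → ∀ a, s a = 0)
    (q : Γ → Γ') (hq : ∀ g, p (q g) = g)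
    (c : Γ → Γ → ℤ) (hc : ∀ g h, ι (c g h) = q g * q h * (q (g * h))⁻¹) :
    ¬ ∃ b : Γ → ℝ, ∀ g h, (c g h : ℝ) = b g + b h - b (g * h) :=
  stmt19_general p ι hιhom hιinj hcentral hker hT q hq c hc
end
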